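/- Let k ≥ 1 and let u₀, u₁, …, u_{k+1} ∈ ℤ² satisfy det(u_{i−1}, u_i) = 1 for all 1 ≤ i ≤ k+1, and let λ₁,…,λ_k be integers with u_{i−1} + u_{i+1} = λ_i · u_i for all 1 ≤ i ≤ k. Assume moreover that det(u₀, u_{k+1}) > 0 and that for each 1 ≤ j ≤ k one can write u_j = α_j · u₀ + β_j · u_{k+1} with real α_j ≥ 0 and β_j > 0 (i.e. u₁,…,u_k lie in the pointed cone spanned by u₀ and u_{k+1}, off the ray through u₀). Then the k×k real tridiagonal matrix A_k with diagonal entries λ₁,…,λ_k, entries −1 on the first super- and subdiagonal, and 0 elsewhere, is positive definite. -/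

import Mathlib

/-!
Put `P i = det(u₀, u_i)`. Then `P 0 = 0`, the recursion for `u` gives
`P (i-1) + P (i+1) = λ_i P i`, and `P i > 0` for `1 ≤ i ≤ k+1` because the cone condition
gives `P i = β_i P (k+1)`. For any such positive solution the discrete Picone identity
`xᵀ A_k x = ∑ᵢ (P (i+1) xᵢ - P i x_{i+1})² / (P i P (i+1))` (with `x₀ = x_{k+1} = 0`)
exhibits the quadratic form as a sum of squares; it vanishes only if `xᵢ / P i` is constant,
hence zero because `x_{k+1} = 0`.
-/

/-- The planar determinant `det(u,w) = u¹w² − u²w¹`. -/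
def det2 (u w : ℤ × ℤ) : ℤ := u.1 * w.2 - u.2 * w.1

/-- The canonical map `ℤ² → ℝ²`. -/
def toR2 (u : ℤ × ℤ) : ℝ × ℝ := ((u.1 : ℝ), (u.2 : ℝ))

/-- The `j × j` tridiagonal matrix with diagonal entries `lam 1, …, lam j`,
entries `-1` on the first super- and subdiagonal, and `0` elsewhere. -/
def tridiag (lam : ℕ → ℝ) (j : ℕ) : Matrix (Fin j) (Fin j) ℝ :=
  Matrix.of fun i i' =>
    if (i : ℕ) = (i' : ℕ) then lam ((i : ℕ) + 1)
    else if (i : ℕ) + 1 = (i' : ℕ) ∨ (i' : ℕ) + 1 = (i : ℕ) then -1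
    else 0

open scoped Matrix
open Finset

lemma discrete_picone_identity {lam P X : ℕ → ℝ} (k : ℕ) (hP0 : P 0 = 0)
    (hP : ∀ i ≤ k, P (i + 1) ≠ 0) (hrec : ∀ i < k, P i + P (i + 2) = lam (i + 1) * P (i + 1))
    (hX0 : X 0 = 0) (hXk : X (k + 1) = 0) :
    ∑ i ∈ range k, X (i + 1) * (lam (i + 1) * X (i + 1) - X i - X (i + 2)) =
      ∑ i ∈ range k,
        (P (i + 2) * X (i + 1) - P (i + 1) * X (i + 2)) ^ 2 / (P (i + 1) * P (i + 2)) := by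
  set G : ℕ → ℝ := fun i => P i / P (i + 1) * X (i + 1) ^ 2 - X i * X (i + 1)
  have hterm : ∀ i ∈ range k, X (i + 1) * (lam (i + 1) * X (i + 1) - X i - X (i + 2)) =
      (P (i + 2) * X (i + 1) - P (i + 1) * X (i + 2)) ^ 2 / (P (i + 1) * P (i + 2))
        + (G i - G (i + 1)) := by
    intro i hi
    have hi : i < k := mem_range.1 hi
    have h1 := hP i hi.le
    have h2 : P (i + 2) ≠ 0 := hP (i + 1) hi
    simp only [G]
    field_simp
    linear_combination -(P (i + 2) * X (i + 1) ^ 2) * hrec i hi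
  have hG0 : G 0 = 0 := by simp [G, hP0, hX0]
  have hGk : G k = 0 := by simp [G, hXk]
  rw [sum_congr rfl hterm, sum_add_distrib, sum_range_sub', hG0, hGk, sub_zero, add_zero]

lemma eq_zero_of_mul_eq_mul_succ {P X : ℕ → ℝ} (k : ℕ) (hP : ∀ i ≤ k, P (i + 1) ≠ 0)
    (h : ∀ i < k, P (i + 2) * X (i + 1) = P (i + 1) * X (i + 2)) (hXk : X (k + 1) = 0) :
    ∀ i ≤ k, X (i + 1) = 0 := by
  intro i hi
  induction hi using Nat.decreasingInduction with
  | self => exact hXk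
  | of_succ i hi ih =>
    have hrel := h i hi
    rw [ih, mul_zero] at hrel
    exact (mul_eq_zero.1 hrel).resolve_left (hP (i + 1) hi)

section Tridiag

variable {k : ℕ}

-- The entry `x i` sits at position `i + 1`; positions `0` and `k + 1` hold the boundary values
-- `x₀ = x_{k+1} = 0`.
def extendByZero (x : Fin k → ℝ) : ℕ → ℝ
  | 0 => 0
  | n + 1 => if h : n < k then x ⟨n, h⟩ else 0

@[simp] lemma extendByZero_zero (x : Fin k → ℝ) : extendByZero x 0 = 0 := rfl

@[simp] lemma extendByZero_succ_fin (x : Fin k → ℝ) (i : Fin k) :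
    extendByZero x (i + 1) = x i := dif_pos i.isLt

lemma extendByZero_of_lt (x : Fin k → ℝ) {n : ℕ} (hn : k < n) : extendByZero x n = 0 := by
  obtain ⟨n, rfl⟩ : ∃ m, n = m + 1 := ⟨n - 1, by omega⟩
  exact dif_neg (by omega)

lemma tridiag_isHermitian (lam : ℕ → ℝ) : (tridiag lam k).IsHermitian := by
  ext i j
  simp only [tridiag, Matrix.conjTranspose_apply, Matrix.of_apply, star_trivial]
  split_ifs <;> first | rfl | omega | (rename_i h _; rw [h])

lemma tridiag_mulVec_apply (lam : ℕ → ℝ) (x : Fin k → ℝ) (i : Fin k) :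
    (tridiag lam k *ᵥ x) i = lam (i + 1) * extendByZero x (i + 1)
      - extendByZero x i - extendByZero x (i + 2) := by
  set X := extendByZero x
  have hsplit : ∀ j : Fin k, tridiag lam k i j * x j =
      (if (j : ℕ) = i then lam (i + 1) * X (j + 1) else 0)
      - (if (j : ℕ) = i + 1 then X (j + 1) else 0) - (if (j : ℕ) + 1 = i then X (j + 1) else 0) := by
    intro j
    simp only [tridiag, Matrix.of_apply, X, extendByZero_succ_fin]
    split_ifs <;> first | omega | ring
  simp only [Matrix.mulVec, dotProduct, hsplit]
  rw [Fin.sum_univ_eq_sum_range (fun j => (if j = (i : ℕ) then lam (i + 1) * X (j + 1) else 0)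
      - (if j = i + 1 then X (j + 1) else 0) - (if j + 1 = i then X (j + 1) else 0))]
  simp only [sum_sub_distrib, sum_ite_eq', mem_range, i.isLt, if_true]
  have hnext : (if (i : ℕ) + 1 < k then X (i + 1 + 1) else 0) = X (i + 2) := by
    split_ifs with h
    · rfl
    · exact (extendByZero_of_lt x (by omega)).symm
  have hprev : (∑ j ∈ range k, if j + 1 = (i : ℕ) then X (j + 1) else 0) = X i := by
    obtain ⟨_ | m, hi⟩ := i
    · simp [X]
    · simp only [Nat.add_right_cancel_iff, sum_ite_eq', mem_range]
      exact if_pos (by omega)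
  rw [hnext, hprev]
  ring

lemma dotProduct_tridiag_mulVec (lam : ℕ → ℝ) (x : Fin k → ℝ) :
    x ⬝ᵥ (tridiag lam k *ᵥ x) = ∑ i ∈ range k, extendByZero x (i + 1) *
      (lam (i + 1) * extendByZero x (i + 1) - extendByZero x i - extendByZero x (i + 2)) := by
  rw [← Fin.sum_univ_eq_sum_range (fun i => extendByZero x (i + 1) *
      (lam (i + 1) * extendByZero x (i + 1) - extendByZero x i - extendByZero x (i + 2)))]
  simp only [dotProduct, tridiag_mulVec_apply, extendByZero_succ_fin]

end Tridiag

theorem tridiag_posDef_of_pos_solution {lam P : ℕ → ℝ} (k : ℕ) (hP0 : P 0 = 0)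
    (hP : ∀ i ≤ k, 0 < P (i + 1)) (hrec : ∀ i < k, P i + P (i + 2) = lam (i + 1) * P (i + 1)) :
    (tridiag lam k).PosDef := by
  refine .of_dotProduct_mulVec_pos (tridiag_isHermitian lam) fun x hx => ?_
  set X := extendByZero x
  have hPne : ∀ i ≤ k, P (i + 1) ≠ 0 := fun i hi => (hP i hi).ne'
  have hXk : X (k + 1) = 0 := extendByZero_of_lt x k.lt_succ_self
  rw [star_trivial, dotProduct_tridiag_mulVec,
    discrete_picone_identity k hP0 hPne hrec (extendByZero_zero x) hXk]
  have hnonneg : ∀ i ∈ range k,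
      0 ≤ (P (i + 2) * X (i + 1) - P (i + 1) * X (i + 2)) ^ 2 / (P (i + 1) * P (i + 2)) :=
    fun i hi => div_nonneg (sq_nonneg _)
      (mul_pos (hP i (mem_range.1 hi).le) (hP (i + 1) (mem_range.1 hi))).le
  refine (sum_nonneg hnonneg).lt_of_ne fun hzero => hx ?_
  have hrel : ∀ i < k, P (i + 2) * X (i + 1) = P (i + 1) * X (i + 2) := by
    intro i hi
    have hsq := (sum_eq_zero_iff_of_nonneg hnonneg).1 hzero.symm i (mem_range.2 hi)
    rw [div_eq_zero_iff, mul_eq_zero, sq_eq_zero_iff, sub_eq_zero] at hsq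
    exact hsq.resolve_right (not_or.2 ⟨hPne i hi.le, hPne (i + 1) hi⟩)
  funext i
  simpa [X] using eq_zero_of_mul_eq_mul_succ k hPne hrel hXk i i.isLt.le

lemma det2_self (a : ℤ × ℤ) : det2 a a = 0 := by
  unfold det2; ring

lemma det2_add_right (a v w : ℤ × ℤ) : det2 a (v + w) = det2 a v + det2 a w := by
  simp only [det2, Prod.fst_add, Prod.snd_add]; ring

lemma det2_smul_right (a w : ℤ × ℤ) (c : ℤ) : det2 a (c • w) = c * det2 a w := by
  simp only [det2, Prod.smul_fst, Prod.smul_snd, smul_eq_mul]; ring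

lemma det2_eq_of_toR2_eq {a b w : ℤ × ℤ} {α β : ℝ}
    (h : toR2 w = α • toR2 a + β • toR2 b) : (det2 a w : ℝ) = β * det2 a b := by
  have h1 := congrArg Prod.fst h
  have h2 := congrArg Prod.snd h
  simp only [toR2, Prod.fst_add, Prod.snd_add, Prod.smul_fst, Prod.smul_snd, smul_eq_mul] at h1 h2
  simp only [det2]
  push_cast
  linear_combination (a.1 : ℝ) * h2 - (a.2 : ℝ) * h1

theorem tridiag_posDef_general (k : ℕ) (u : ℕ → ℤ × ℤ) (lam : ℕ → ℤ)
    (hrec : ∀ i, 1 ≤ i → i ≤ k → u (i - 1) + u (i + 1) = lam i • u i)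
    (hpos : 0 < det2 (u 0) (u (k + 1)))
    (hcone : ∀ j, 1 ≤ j → j ≤ k → ∃ α β : ℝ, 0 ≤ α ∧ 0 < β ∧
      toR2 (u j) = α • toR2 (u 0) + β • toR2 (u (k + 1))) :
    (tridiag (fun i => (lam i : ℝ)) k).PosDef := by
  set P : ℕ → ℝ := fun i => (det2 (u 0) (u i) : ℝ)
  refine tridiag_posDef_of_pos_solution (P := P) k (by simp [P, det2_self]) (fun i hi => ?_)
    (fun i hi => ?_)
  · simp only [P]
    rcases hi.lt_or_eq with hi | rfl
    · obtain ⟨α, β, -, hβ, hu⟩ := hcone (i + 1) (by omega) (by omega)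
      rw [det2_eq_of_toR2_eq hu]
      exact mul_pos hβ (by exact_mod_cast hpos)
    · exact_mod_cast hpos
  · have h := congrArg (det2 (u 0)) (hrec (i + 1) (by omega) (by omega))
    rw [Nat.add_sub_cancel, det2_add_right, det2_smul_right] at h
    simp only [P]
    exact_mod_cast h

/-- If moreover `det(u₀, u_{k+1}) > 0` and `u₁,…,u_k` lie in the pointed cone
spanned by `u₀` and `u_{k+1}` (off the ray through `u₀`), then the tridiagonal
matrix `A_k` is positive definite. -/
theorem tridiag_posDef (k : ℕ) (hk : 1 ≤ k) (u : ℕ → ℤ × ℤ) (lam : ℕ → ℤ)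
    (hdet : ∀ i ≤ k, det2 (u i) (u (i + 1)) = 1)
    (hrec : ∀ i, 1 ≤ i → i ≤ k → u (i - 1) + u (i + 1) = lam i • u i)
    (hpos : 0 < det2 (u 0) (u (k + 1)))
    (hcone : ∀ j, 1 ≤ j → j ≤ k → ∃ α β : ℝ, 0 ≤ α ∧ 0 < β ∧
      toR2 (u j) = α • toR2 (u 0) + β • toR2 (u (k + 1))) :
    (tridiag (fun i => (lam i : ℝ)) k).PosDef :=
  tridiag_posDef_general k u lam hrec hpos hcone
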